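/- arXiv:2605.27169 — 2 statements merged into one kernel-verified Lean document; each statement's English description precedes it below -/
import Mathlib

section
/- Let p ≡ 1 (mod 4) be a prime and let B_p = ∏_{0<k<p/4} C(2k,k), the product of central binomial coefficients C(2k,k) over integers k with 0 < k < p/4. Then the Legendre symbols satisfy (B_p/p) = (2/p) = (((p−1)/2)! / p). -/
open Finset Nat

section helpers

variable (p : ℕ) [Fact p.Prime]

private def lsn (n : ℕ) : ℤ := legendreSym p (n : ℤ)

private lemma lsn_mul (a b : ℕ) : lsn p (a * b) = lsn p a * lsn p b := by
  unfold lsn; push_cast; exact legendreSym.mul p a b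

private lemma lsn_prod {α : Type} (s : Finset α) (f : α → ℕ) :
    lsn p (∏ i ∈ s, f i) = ∏ i ∈ s, lsn p (f i) := by
  classical
  induction s using Finset.cons_induction with
  | empty => simp [lsn]
  | cons a s ha ih => rw [Finset.prod_cons, Finset.prod_cons, lsn_mul, ih]

private lemma cast_ne_zero {n : ℕ} (h : ¬ p ∣ n) : ((n : ℤ) : ZMod p) ≠ 0 := by
  push_cast
  rw [Ne, ZMod.natCast_eq_zero_iff]
  exact h

private lemma lsn_sq {n : ℕ} (h : ¬ p ∣ n) : lsn p n * lsn p n = 1 := by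
  have := legendreSym.sq_one p (a := (n : ℤ)) (cast_ne_zero p h)
  rwa [pow_two] at this

private lemma not_dvd_of_lt {n : ℕ} (h0 : 0 < n) (h : n < p) : ¬ p ∣ n := fun hd =>
  absurd (Nat.le_of_dvd h0 hd) (not_le.2 h)

private lemma not_dvd_fact {n : ℕ} (h : n < p) : ¬ p ∣ n ! := fun hd =>
  absurd ((Nat.Prime.dvd_factorial Fact.out).mp hd) (by omega)

private lemma lsn_fact (n : ℕ) : lsn p (n !) = ∏ i ∈ range n, lsn p (i + 1) := by
  rw [← Finset.prod_range_add_one_eq_factorial, lsn_prod]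

private lemma pm_inj (hp5 : 5 ≤ p) {a b : ℤ} (ha : a = 1 ∨ a = -1) (hb : b = 1 ∨ b = -1)
    (h : (a : ZMod p) = (b : ZMod p)) : a = b := by
  have hne : ((1 : ZMod p)) ≠ -1 := by
    intro hh
    have h2 : ((2 : ℕ) : ZMod p) = 0 := by push_cast; linear_combination hh
    rw [ZMod.natCast_eq_zero_iff] at h2
    exact absurd (Nat.le_of_dvd (by norm_num) h2) (by omega)
  rcases ha with rfl | rfl <;> rcases hb with rfl | rfl <;> push_cast at h <;>
    first
    | rfl
    | exact absurd h hne
    | exact absurd h.symm hne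

end helpers

private lemma two_mul_fact (k : ℕ) : (2 * k)! = ∏ i ∈ range k, ((2 * i + 1) * (2 * i + 2)) := by
  induction k with
  | zero => rfl
  | succ n ih =>
    rw [prod_range_succ, ← ih, show 2 * (n + 1) = (2 * n + 1) + 1 by ring,
      Nat.factorial_succ, Nat.factorial_succ]
    ring

private lemma triangle (g : ℕ → ℤ) (n : ℕ) :
    ∏ k ∈ range n, ∏ i ∈ range (k + 1), g i = ∏ i ∈ range n, g i ^ (n - i) := by
  induction n with
  | zero => rfl
  | succ n ih =>
    rw [prod_range_succ, ih]
    have h1 : ∀ i ∈ range (n + 1), g i ^ (n + 1 - i) = g i ^ (n - i) * g i := by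
      intro i hi; rw [mem_range] at hi
      rw [show n + 1 - i = (n - i) + 1 by omega, pow_succ]
    rw [Finset.prod_congr rfl h1, prod_mul_distrib, prod_range_succ (fun i => g i ^ (n - i)),
      Nat.sub_self, pow_zero, mul_one]

private lemma pow_of_sq (u : ℤ) (h : u * u = 1) (e : ℕ) :
    u ^ e = if e % 2 = 1 then u else 1 := by
  have h2 : u ^ 2 = 1 := by rw [pow_two, h]
  conv_lhs => rw [← Nat.div_add_mod e 2]
  rw [pow_add, pow_mul, h2, one_pow, one_mul]
  rcases Nat.mod_two_eq_zero_or_one e with h' | h' <;> simp [h']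

private lemma prod_range_double (f : ℕ → ℤ) (t : ℕ) :
    ∏ i ∈ range (2 * t), f i = ∏ j ∈ range t, (f (2 * j) * f (2 * j + 1)) := by
  induction t with
  | zero => rfl
  | succ n ih =>
    rw [prod_range_succ, ← ih, show 2 * (n + 1) = (2 * n + 1) + 1 by ring,
      prod_range_succ, prod_range_succ]
    ring

private lemma lsn_two_fact (p : ℕ) [Fact p.Prime] (n : ℕ) :
    lsn p ((2 * n)!) = ∏ i ∈ range n, (lsn p (2 * i + 1) * lsn p (2 * i + 2)) := by
  rw [two_mul_fact, lsn_prod]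
  exact Finset.prod_congr rfl fun i _ => lsn_mul p _ _

private lemma odd_split (p : ℕ) [Fact p.Prime] (n : ℕ) :
    lsn p ((2 * n)!)
      = (∏ i ∈ range n, lsn p (2 * i + 1)) * (lsn p 2 ^ n * lsn p (n !)) := by
  rw [two_mul_fact, lsn_prod, lsn_fact]
  have e : ∀ i ∈ range n,
      lsn p ((2 * i + 1) * (2 * i + 2)) = lsn p (2 * i + 1) * (lsn p 2 * lsn p (i + 1)) := by
    intro i _
    rw [lsn_mul, show 2 * i + 2 = 2 * (i + 1) by ring, lsn_mul]
  rw [Finset.prod_congr rfl e, prod_mul_distrib, prod_mul_distrib, prod_const, card_range]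

section main

variable {p : ℕ} [Fact p.Prime]

private lemma lsn_reflect (hp : p % 4 = 1) {a b : ℕ} (h : a + b = p) :
    lsn p a = lsn p b := by
  have hp5 : 5 ≤ p := by have := (Fact.out : p.Prime).two_le; omega
  have key : (a : ℤ) % p = (-1 * b) % p := by
    rw [Int.emod_eq_emod_iff_emod_sub_eq_zero]
    have hd : (a : ℤ) - (-1 * b) = p := by
      have hc : ((a + b : ℕ) : ℤ) = (p : ℤ) := by exact_mod_cast congrArg (Nat.cast : ℕ → ℤ) h
      push_cast at hc
      linarith
    rw [hd, Int.emod_self]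
  have hneg1 : legendreSym p (-1) = 1 := by
    rw [legendreSym.at_neg_one (by omega), ZMod.χ₄_nat_eq_if_mod_four]
    rw [if_neg (by omega), if_pos (by omega)]
  calc lsn p a = legendreSym p ((a : ℤ) % p) := legendreSym.mod p a
    _ = legendreSym p ((-1 * b) % p) := by rw [key]
    _ = legendreSym p (-1 * b) := (legendreSym.mod p _).symm
    _ = legendreSym p (-1) * legendreSym p b := legendreSym.mul p _ _
    _ = lsn p b := by rw [hneg1, one_mul, lsn]

private lemma wilson_half {m : ℕ} (hm : p = 4 * m + 1) :
    (((2 * m)! : ℕ) : ZMod p) ^ 2 = -1 := by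
  have h1 : (((p - 1)! : ℕ) : ZMod p) = -1 := ZMod.wilsons_lemma p
  have h2 : p - 1 = 2 * m + 2 * m := by omega
  rw [h2, ← Finset.prod_range_add_one_eq_factorial, Finset.prod_range_add, Nat.cast_mul,
    Nat.cast_prod, Nat.cast_prod] at h1
  have e1 : ∏ i ∈ range (2 * m), ((i + 1 : ℕ) : ZMod p) = (((2 * m)! : ℕ) : ZMod p) := by
    rw [← Finset.prod_range_add_one_eq_factorial, Nat.cast_prod]
  have e2 : ∏ i ∈ range (2 * m), ((2 * m + i + 1 : ℕ) : ZMod p)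
      = (((2 * m)! : ℕ) : ZMod p) := by
    rw [← Finset.prod_range_reflect (fun j => ((2 * m + j + 1 : ℕ) : ZMod p)) (2 * m)]
    have e3 : ∀ j ∈ range (2 * m),
        ((2 * m + (2 * m - 1 - j) + 1 : ℕ) : ZMod p) = (-1) * ((j + 1 : ℕ) : ZMod p) := by
      intro j hj
      rw [mem_range] at hj
      have e4 : 2 * m + (2 * m - 1 - j) + 1 = p - (j + 1) := by omega
      rw [e4, Nat.cast_sub (by omega), ZMod.natCast_self, zero_sub]
      ring
    rw [Finset.prod_congr rfl e3, prod_mul_distrib, prod_const, card_range, e1]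
    have e5 : ((-1 : ZMod p)) ^ (2 * m) = 1 := by
      rw [pow_mul]; norm_num
    rw [e5, one_mul]
  rw [e1, e2, ← pow_two] at h1
  exact h1

private lemma lsn_half_fact {m : ℕ} (hm : p = 4 * m + 1) :
    lsn p ((2 * m)!) = (-1) ^ m := by
  have hp5 : 5 ≤ p := by have := (Fact.out : p.Prime).two_le; omega
  have he := legendreSym.eq_pow p (((2 * m)! : ℕ) : ℤ)
  rw [show p / 2 = 2 * m by omega] at he
  have hc : ((((2 * m)! : ℕ) : ℤ) : ZMod p) = (((2 * m)! : ℕ) : ZMod p) := by push_cast; rfl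
  rw [hc, pow_mul, wilson_half hm] at he
  refine pm_inj p hp5 ?_ ?_ ?_
  · exact legendreSym.eq_one_or_neg_one p (cast_ne_zero p (not_dvd_fact p (by omega)))
  · rcases Nat.even_or_odd m with h | h
    · left; exact h.neg_one_pow
    · right; exact h.neg_one_pow
  · unfold lsn; rw [he]; push_cast; rfl

private lemma lsn_two {m : ℕ} (hm : p = 4 * m + 1) : lsn p 2 = (-1) ^ m := by
  have hp5 : 5 ≤ p := by have := (Fact.out : p.Prime).two_le; omega
  have h2 : lsn p 2 = legendreSym p 2 := by unfold lsn; norm_num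
  rw [h2, legendreSym.at_two (by omega), ZMod.χ₈_nat_eq_if_mod_eight]
  rcases Nat.even_or_odd m with ⟨t, ht⟩ | ⟨t, ht⟩
  · rw [if_neg (by omega), if_pos (by omega : p % 8 = 1 ∨ p % 8 = 7)]
    rw [show m = 2 * t by omega, pow_mul]
    norm_num
  · rw [if_neg (by omega), if_neg (by omega : ¬(p % 8 = 1 ∨ p % 8 = 7))]
    rw [show m = 2 * t + 1 by omega, pow_succ, pow_mul]
    norm_num

end main

/-- Let `p ≡ 1 (mod 4)` be a prime and `B_p = ∏_{0<k<p/4} C(2k,k)`. Then the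
Legendre symbols satisfy `(B_p/p) = (2/p) = (((p-1)/2)!/p)`. -/
theorem stmt_16 (p : ℕ) [Fact p.Prime] (hp : p % 4 = 1) :
    legendreSym p ((∏ k ∈ (Finset.range p).filter (fun k => 0 < k ∧ 4 * k < p),
        Nat.choose (2 * k) k : ℕ) : ℤ) = legendreSym p 2 ∧
    legendreSym p 2 = legendreSym p ((Nat.factorial ((p - 1) / 2) : ℕ) : ℤ) := by
  have hp5 : 5 ≤ p := by have := (Fact.out : p.Prime).two_le; omega
  obtain ⟨m, hm⟩ : ∃ m, p = 4 * m + 1 := ⟨p / 4, by omega⟩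
  have hm1 : 1 ≤ m := by omega
  have h2l : legendreSym p 2 = lsn p 2 := by unfold lsn; norm_num
  have hpart2 : legendreSym p 2 = legendreSym p ((Nat.factorial ((p - 1) / 2) : ℕ) : ℤ) := by
    rw [show (p - 1) / 2 = 2 * m by omega, h2l, lsn_two hm]
    exact (lsn_half_fact hm).symm
  refine ⟨?_, hpart2⟩
  -- basic squares
  have hA : lsn p 2 * lsn p 2 = 1 := lsn_sq p (not_dvd_of_lt p (by norm_num) (by omega))
  -- rewrite the index set
  have hset : (Finset.range p).filter (fun k => 0 < k ∧ 4 * k < p) = Finset.Ico 1 (m + 1) := by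
    ext k
    simp only [mem_filter, mem_range, mem_Ico]
    omega
  rw [hset, Finset.prod_Ico_eq_prod_range, Nat.add_sub_cancel]
  show lsn p (∏ i ∈ range m, Nat.choose (2 * (1 + i)) (1 + i)) = legendreSym p 2
  -- each binomial coefficient has the same symbol as (2k)!
  have hterm : ∀ k ∈ range m, lsn p (Nat.choose (2 * (1 + k)) (1 + k))
      = ∏ i ∈ range (k + 1), (lsn p (2 * i + 1) * lsn p (2 * i + 2)) := by
    intro k hk
    rw [mem_range] at hk
    have hle : 1 + k ≤ 2 * (1 + k) := by omega
    have hch := Nat.choose_mul_factorial_mul_factorial hle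
    rw [show 2 * (1 + k) - (1 + k) = 1 + k by omega] at hch
    have h1 : lsn p (Nat.choose (2 * (1 + k)) (1 + k) * (1 + k)! * (1 + k)!)
        = lsn p ((2 * (1 + k))!) := by rw [hch]
    rw [lsn_mul, lsn_mul, mul_assoc, lsn_sq p (not_dvd_fact p (by omega)), mul_one] at h1
    rw [h1, lsn_two_fact p (1 + k), show 1 + k = k + 1 by omega]
  have hGsq : ∀ i ∈ range m,
      (lsn p (2 * i + 1) * lsn p (2 * i + 2)) * (lsn p (2 * i + 1) * lsn p (2 * i + 2)) = 1 := by
    intro i hi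
    rw [mem_range] at hi
    have h1 := lsn_sq p (not_dvd_of_lt p (show 0 < 2 * i + 1 by omega) (by omega))
    have h2 := lsn_sq p (not_dvd_of_lt p (show 0 < 2 * i + 2 by omega) (by omega))
    calc (lsn p (2 * i + 1) * lsn p (2 * i + 2)) * (lsn p (2 * i + 1) * lsn p (2 * i + 2))
        = (lsn p (2 * i + 1) * lsn p (2 * i + 1)) * (lsn p (2 * i + 2) * lsn p (2 * i + 2)) := by
          ring
      _ = 1 := by rw [h1, h2, one_mul]
  set T : ℤ := ∏ i ∈ range m,
    (if (m - i) % 2 = 1 then (1 : ℤ) else lsn p (2 * i + 1) * lsn p (2 * i + 2)) with hTdef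
  have hB : lsn p (∏ i ∈ range m, Nat.choose (2 * (1 + i)) (1 + i))
      = ∏ i ∈ range m,
          (if (m - i) % 2 = 1 then lsn p (2 * i + 1) * lsn p (2 * i + 2) else 1) := by
    rw [lsn_prod]
    calc ∏ k ∈ range m, lsn p (Nat.choose (2 * (1 + k)) (1 + k))
        = ∏ k ∈ range m, ∏ i ∈ range (k + 1), (lsn p (2 * i + 1) * lsn p (2 * i + 2)) :=
          Finset.prod_congr rfl hterm
      _ = ∏ i ∈ range m, (lsn p (2 * i + 1) * lsn p (2 * i + 2)) ^ (m - i) :=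
          triangle _ m
      _ = _ := Finset.prod_congr rfl fun i hi => pow_of_sq _ (hGsq i hi) _
  have hf2 : lsn p ((2 * m)!) = ∏ i ∈ range m, (lsn p (2 * i + 1) * lsn p (2 * i + 2)) :=
    lsn_two_fact p m
  have hBfT : lsn p (∏ i ∈ range m, Nat.choose (2 * (1 + i)) (1 + i)) * lsn p ((2 * m)!)
      = T := by
    rw [hB, hf2, hTdef, ← prod_mul_distrib]
    refine Finset.prod_congr rfl fun i hi => ?_
    by_cases hc : (m - i) % 2 = 1
    · rw [if_pos hc, if_pos hc, hGsq i hi]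
    · rw [if_neg hc, if_neg hc, one_mul]
  -- now the key claim: T = 1
  have hT1 : T = 1 := by
    rcases Nat.even_or_odd m with ⟨t, ht⟩ | ⟨t, ht⟩
    · -- even case : m = 2 * t
      have ht2 : m = 2 * t := by omega
      have step1 : T = ∏ j ∈ range t, (lsn p (2 * (2 * j) + 1) * lsn p (2 * (2 * j) + 2)) := by
        rw [hTdef, ht2, prod_range_double]
        refine Finset.prod_congr rfl fun j hj => ?_
        rw [mem_range] at hj
        rw [if_neg (by omega : ¬(2 * t - 2 * j) % 2 = 1),
          if_pos (by omega : (2 * t - (2 * j + 1)) % 2 = 1), mul_one]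
      have step2 : T = (∏ j ∈ range t, lsn p (2 * (2 * j) + 1))
          * ∏ j ∈ range t, lsn p (2 * (2 * j) + 2) := by
        rw [step1, prod_mul_distrib]
      -- Q1 : product of numbers ≡ 1 mod 4, via reflection
      have hQ1 : ∏ j ∈ range t, lsn p (2 * (2 * j) + 1)
          = ∏ j ∈ range t, lsn p (t + j + 1) := by
        have e1 : ∀ j ∈ range t, lsn p (2 * (2 * j) + 1) = lsn p (m - j) := by
          intro j hj
          rw [mem_range] at hj
          rw [lsn_reflect hp (show (2 * (2 * j) + 1) + 2 * (2 * (m - j)) = p by omega)]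
          rw [lsn_mul, lsn_mul, ← mul_assoc, hA, one_mul]
        rw [Finset.prod_congr rfl e1,
          ← Finset.prod_range_reflect (fun j => lsn p (m - j)) t]
        refine Finset.prod_congr rfl fun j hj => ?_
        rw [mem_range] at hj
        have : m - (t - 1 - j) = t + j + 1 := by omega
        rw [this]
      -- Q2 : product of numbers ≡ 2 mod 4
      have hQ2 : ∏ j ∈ range t, lsn p (2 * (2 * j) + 2)
          = lsn p 2 ^ t * ∏ j ∈ range t, lsn p (2 * j + 1) := by
        have e1 : ∀ j ∈ range t,
            lsn p (2 * (2 * j) + 2) = lsn p 2 * lsn p (2 * j + 1) := by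
          intro j _
          rw [show 2 * (2 * j) + 2 = 2 * (2 * j + 1) by ring, lsn_mul]
        rw [Finset.prod_congr rfl e1, prod_mul_distrib, prod_const, card_range]
      have hE1 : lsn p (m !) = lsn p (t !) * ∏ j ∈ range t, lsn p (t + j + 1) := by
        rw [lsn_fact, show m = t + t by omega, Finset.prod_range_add, ← lsn_fact]
      have hE2 : lsn p (m !)
          = (∏ j ∈ range t, lsn p (2 * j + 1)) * (lsn p 2 ^ t * lsn p (t !)) := by
        have h0 := odd_split p t
        rw [show 2 * t = m by omega] at h0
        exact h0
      have hFt : lsn p (t !) * lsn p (t !) = 1 := lsn_sq p (not_dvd_fact p (by omega))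
      have hFm : lsn p (m !) * lsn p (m !) = 1 := lsn_sq p (not_dvd_fact p (by omega))
      have key : T * (lsn p (t !) * lsn p (t !))
          = (lsn p (t !) * ∏ j ∈ range t, lsn p (t + j + 1))
            * ((∏ j ∈ range t, lsn p (2 * j + 1)) * (lsn p 2 ^ t * lsn p (t !))) := by
        rw [step2, hQ1, hQ2]; ring
      rw [← hE1, ← hE2, hFt, mul_one, hFm] at key
      exact key
    · -- odd case : m = 2 * t + 1
      have ht2 : m = 2 * t + 1 := by omega
      have step1 : T
          = ∏ j ∈ range t, (lsn p (2 * (2 * j + 1) + 1) * lsn p (2 * (2 * j + 1) + 2)) := by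
        rw [hTdef, ht2, prod_range_succ,
          if_pos (by omega : (2 * t + 1 - 2 * t) % 2 = 1), mul_one, prod_range_double]
        refine Finset.prod_congr rfl fun j hj => ?_
        rw [mem_range] at hj
        rw [if_pos (by omega : (2 * t + 1 - 2 * j) % 2 = 1),
          if_neg (by omega : ¬(2 * t + 1 - (2 * j + 1)) % 2 = 1), one_mul]
      have step2 : T = (∏ j ∈ range t, lsn p (2 * (2 * j + 1) + 1))
          * ∏ j ∈ range t, lsn p (2 * (2 * j + 1) + 2) := by
        rw [step1, prod_mul_distrib]
      have hQ2 : ∏ j ∈ range t, lsn p (2 * (2 * j + 1) + 2) = lsn p (t !) := by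
        have e1 : ∀ j ∈ range t, lsn p (2 * (2 * j + 1) + 2) = lsn p (j + 1) := by
          intro j _
          rw [show 2 * (2 * j + 1) + 2 = 2 * (2 * (j + 1)) by ring, lsn_mul, lsn_mul,
            ← mul_assoc, hA, one_mul]
        rw [Finset.prod_congr rfl e1, ← lsn_fact]
      have hQ1 : ∏ j ∈ range t, lsn p (2 * (2 * j + 1) + 1)
          = lsn p 2 ^ t * ∏ j ∈ range t, lsn p (2 * ((t + 1) + j) + 1) := by
        have e1 : ∀ j ∈ range t,
            lsn p (2 * (2 * j + 1) + 1) = lsn p 2 * lsn p (2 * (m - 1 - j) + 1) := by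
          intro j hj
          rw [mem_range] at hj
          rw [lsn_reflect hp
            (show (2 * (2 * j + 1) + 1) + 2 * (2 * (m - 1 - j) + 1) = p by omega), lsn_mul]
        rw [Finset.prod_congr rfl e1, prod_mul_distrib, prod_const, card_range,
          ← Finset.prod_range_reflect (fun j => lsn p (2 * (m - 1 - j) + 1)) t]
        congr 1
        refine Finset.prod_congr rfl fun j hj => ?_
        rw [mem_range] at hj
        have : m - 1 - (t - 1 - j) = (t + 1) + j := by omega
        rw [this]
      have hE3 : ∏ i ∈ range m, lsn p (2 * i + 1)
          = (∏ i ∈ range (t + 1), lsn p (2 * i + 1))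
            * ∏ j ∈ range t, lsn p (2 * ((t + 1) + j) + 1) := by
        rw [show m = (t + 1) + t by omega, Finset.prod_range_add]
      have hfL : lsn p ((2 * m)!) = lsn p 2 := by
        rw [lsn_half_fact hm, lsn_two hm]
      have r1 : lsn p 2 = (∏ i ∈ range m, lsn p (2 * i + 1)) * (lsn p 2 ^ m * lsn p (m !)) := by
        have r0 := odd_split p m
        rw [hfL] at r0
        exact r0
      have r2 := odd_split p (t + 1)
      have e5 : lsn p ((2 * (t + 1))!) = (lsn p 2 * lsn p (t + 1)) * lsn p (m !) := by
        rw [show 2 * (t + 1) = m + 1 by omega, Nat.factorial_succ, lsn_mul,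
          show m + 1 = 2 * (t + 1) by omega, lsn_mul]
      have e6 : lsn p ((t + 1)!) = lsn p (t + 1) * lsn p (t !) := by
        rw [Nat.factorial_succ, lsn_mul]
      rw [e5, e6] at r2
      -- r2 : (lsn 2 * lsn (t+1)) * lsn m! = Od1 * (lsn 2 ^ (t+1) * (lsn (t+1) * lsn t!))
      -- squares
      have hFt : lsn p (t !) * lsn p (t !) = 1 := lsn_sq p (not_dvd_fact p (by omega))
      have hFm : lsn p (m !) * lsn p (m !) = 1 := lsn_sq p (not_dvd_fact p (by omega))
      have hx : lsn p (t + 1) * lsn p (t + 1) = 1 :=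
        lsn_sq p (not_dvd_of_lt p (by omega) (by omega))
      have hLt : lsn p 2 ^ t * lsn p 2 ^ t = 1 := by
        rw [← mul_pow, hA, one_pow]
      have hOd1 : (∏ i ∈ range (t + 1), lsn p (2 * i + 1))
          * (∏ i ∈ range (t + 1), lsn p (2 * i + 1)) = 1 := by
        rw [← prod_mul_distrib]
        rw [Finset.prod_congr rfl (fun i hi => ?_), prod_const_one]
        rw [mem_range] at hi
        exact lsn_sq p (not_dvd_of_lt p (by omega) (by omega))
      -- solve for the pieces
      have hs1 : (lsn p 2 ^ m * lsn p (m !)) * (lsn p 2 ^ m * lsn p (m !)) = 1 := by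
        have h0 : lsn p 2 ^ m * lsn p 2 ^ m = 1 := by rw [← mul_pow, hA, one_pow]
        calc (lsn p 2 ^ m * lsn p (m !)) * (lsn p 2 ^ m * lsn p (m !))
            = (lsn p 2 ^ m * lsn p 2 ^ m) * (lsn p (m !) * lsn p (m !)) := by ring
          _ = 1 := by rw [h0, hFm, one_mul]
      have hOdm : ∏ i ∈ range m, lsn p (2 * i + 1)
          = lsn p 2 * (lsn p 2 ^ m * lsn p (m !)) := by
        calc ∏ i ∈ range m, lsn p (2 * i + 1)
            = (∏ i ∈ range m, lsn p (2 * i + 1))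
              * ((lsn p 2 ^ m * lsn p (m !)) * (lsn p 2 ^ m * lsn p (m !))) := by
              rw [hs1, mul_one]
          _ = ((∏ i ∈ range m, lsn p (2 * i + 1)) * (lsn p 2 ^ m * lsn p (m !)))
              * (lsn p 2 ^ m * lsn p (m !)) := by ring
          _ = lsn p 2 * (lsn p 2 ^ m * lsn p (m !)) := by rw [← r1]
      have hs2 : (lsn p 2 ^ (t + 1) * (lsn p (t + 1) * lsn p (t !)))
          * (lsn p 2 ^ (t + 1) * (lsn p (t + 1) * lsn p (t !))) = 1 := by
        have h0 : lsn p 2 ^ (t + 1) * lsn p 2 ^ (t + 1) = 1 := by rw [← mul_pow, hA, one_pow]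
        calc (lsn p 2 ^ (t + 1) * (lsn p (t + 1) * lsn p (t !)))
              * (lsn p 2 ^ (t + 1) * (lsn p (t + 1) * lsn p (t !)))
            = (lsn p 2 ^ (t + 1) * lsn p 2 ^ (t + 1)) * ((lsn p (t + 1) * lsn p (t + 1))
              * (lsn p (t !) * lsn p (t !))) := by ring
          _ = 1 := by rw [h0, hx, hFt, one_mul, one_mul]
      have hOd1e : ∏ i ∈ range (t + 1), lsn p (2 * i + 1)
          = ((lsn p 2 * lsn p (t + 1)) * lsn p (m !))
            * (lsn p 2 ^ (t + 1) * (lsn p (t + 1) * lsn p (t !))) := by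
        calc ∏ i ∈ range (t + 1), lsn p (2 * i + 1)
            = (∏ i ∈ range (t + 1), lsn p (2 * i + 1))
              * ((lsn p 2 ^ (t + 1) * (lsn p (t + 1) * lsn p (t !)))
                * (lsn p 2 ^ (t + 1) * (lsn p (t + 1) * lsn p (t !)))) := by rw [hs2, mul_one]
          _ = ((∏ i ∈ range (t + 1), lsn p (2 * i + 1))
              * (lsn p 2 ^ (t + 1) * (lsn p (t + 1) * lsn p (t !))))
              * (lsn p 2 ^ (t + 1) * (lsn p (t + 1) * lsn p (t !))) := by ring
          _ = _ := by rw [← r2]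
      have hQ : ∏ j ∈ range t, lsn p (2 * ((t + 1) + j) + 1)
          = (∏ i ∈ range (t + 1), lsn p (2 * i + 1)) * ∏ i ∈ range m, lsn p (2 * i + 1) := by
        calc ∏ j ∈ range t, lsn p (2 * ((t + 1) + j) + 1)
            = ((∏ i ∈ range (t + 1), lsn p (2 * i + 1))
              * (∏ i ∈ range (t + 1), lsn p (2 * i + 1)))
              * ∏ j ∈ range t, lsn p (2 * ((t + 1) + j) + 1) := by rw [hOd1, one_mul]
          _ = (∏ i ∈ range (t + 1), lsn p (2 * i + 1))
              * ((∏ i ∈ range (t + 1), lsn p (2 * i + 1))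
                * ∏ j ∈ range t, lsn p (2 * ((t + 1) + j) + 1)) := by ring
          _ = _ := by rw [← hE3]
      -- final assembly
      have hLm : lsn p 2 ^ m = (lsn p 2 ^ t * lsn p 2 ^ t) * lsn p 2 := by
        rw [show m = t + (t + 1) by omega, pow_add, pow_succ, mul_assoc]
      calc T = (lsn p 2 ^ t * ∏ j ∈ range t, lsn p (2 * ((t + 1) + j) + 1)) * lsn p (t !) := by
            rw [step2, hQ1, hQ2]
        _ = (lsn p 2 ^ t * ((((lsn p 2 * lsn p (t + 1)) * lsn p (m !))
              * (lsn p 2 ^ (t + 1) * (lsn p (t + 1) * lsn p (t !))))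
              * (lsn p 2 * (((lsn p 2 ^ t * lsn p 2 ^ t) * lsn p 2) * lsn p (m !)))))
            * lsn p (t !) := by
            rw [hQ, hOd1e, hOdm, hLm]
        _ = ((lsn p 2 ^ t * lsn p 2 ^ t) * (lsn p 2 ^ t * lsn p 2 ^ t))
            * (((lsn p 2 * lsn p 2) * (lsn p 2 * lsn p 2))
            * ((lsn p (t + 1) * lsn p (t + 1))
            * ((lsn p (m !) * lsn p (m !)) * (lsn p (t !) * lsn p (t !))))) := by
            rw [pow_succ]; ring
        _ = 1 := by rw [hLt, hA, hx, hFm, hFt]; norm_num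
  -- conclude
  have hfsq : lsn p ((2 * m)!) * lsn p ((2 * m)!) = 1 := lsn_sq p (not_dvd_fact p (by omega))
  have hfin : lsn p (∏ i ∈ range m, Nat.choose (2 * (1 + i)) (1 + i)) = lsn p ((2 * m)!) := by
    calc lsn p (∏ i ∈ range m, Nat.choose (2 * (1 + i)) (1 + i))
        = lsn p (∏ i ∈ range m, Nat.choose (2 * (1 + i)) (1 + i))
          * (lsn p ((2 * m)!) * lsn p ((2 * m)!)) := by rw [hfsq, mul_one]
      _ = (lsn p (∏ i ∈ range m, Nat.choose (2 * (1 + i)) (1 + i)) * lsn p ((2 * m)!))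
          * lsn p ((2 * m)!) := by ring
      _ = lsn p ((2 * m)!) := by rw [hBfT, hT1, one_mul]
  rw [hfin, lsn_half_fact hm, h2l, lsn_two hm]
end

section
/- Let q = 2n+1 ≡ 1 (mod 4) be an odd prime power and χ_q a generator of the group of multiplicative characters of F_q. Then 2·Σ_{x ∈ S_q} φ_q(1+x)χ_q^{n/2}(x) = Σ_{x ∈ F_q} φ_q(x³+x); equivalently, (−1)^{n/2}·(J_q(φ_q,χ_q^{n/2}) + J_q(φ_q,χ_q^{−n/2})) = Σ_{x ∈ F_q} φ_q(x³+x) = −a_q(E), where a_q(E) = −Σ_{x∈F_q} φ_q(x³+x) is the trace of Frobenius of the elliptic curve E: Y² = X³ + X over F_q. -/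
open Finset

open scoped Classical in
/-- Let `q = 2n+1 ≡ 1 (mod 4)` be an odd prime power and `χ` a generator of
the group of multiplicative characters of `F_q`. Then
`2·∑_{x ∈ S_q} φ(1+x)χ^{n/2}(x) = ∑_{x ∈ F_q} φ(x³+x)`; equivalently,
`(-1)^{n/2}·(J_q(φ,χ^{n/2}) + J_q(φ,χ^{-n/2})) = ∑_{x ∈ F_q} φ(x³+x) = -a_q(E)`, where
`a_q(E) = -∑_{x ∈ F_q} φ(x³+x)` is the trace of Frobenius of `E : Y² = X³ + X` over `F_q`. -/
theorem stmt_19 {F : Type*} [Field F] [Fintype F] (n : ℕ)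
    (hcard : Fintype.card F = 2 * n + 1)
    (hq : Fintype.card F % 4 = 1)
    (φ χ : MulChar F ℂ)
    (hφ : φ ^ 2 = 1 ∧ φ ≠ 1)
    (hχ : ∀ ψ : MulChar F ℂ, ψ ∈ Subgroup.zpowers χ) :
    2 * (∑ x ∈ Finset.univ.filter (fun x : F => x ≠ 0 ∧ IsSquare x),
        φ (1 + x) * (χ ^ (n / 2)) x) = ∑ x : F, φ (x ^ 3 + x) ∧
    (-1 : ℂ) ^ (n / 2) * (jacobiSum φ (χ ^ (n / 2)) + jacobiSum φ (χ ^ (-((n / 2 : ℕ) : ℤ)))) =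
      ∑ x : F, φ (x ^ 3 + x) := by
  obtain ⟨hφ2, hφ1⟩ := hφ
  have hcard1 : 1 < Fintype.card F := Fintype.one_lt_card
  have hn0 : n ≠ 0 := by rintro rfl; omega
  have hneven : n % 2 = 0 := by omega
  have hm : 2 * (n / 2) = n := by omega
  set m := n / 2 with hmdef
  have hm0 : m ≠ 0 := by omega
  have hunits : Fintype.card Fˣ = 2 * n := by
    rw [Fintype.card_units, hcard]
    omega
  -- characteristic ≠ 2
  have hchar : ringChar F ≠ 2 := by
    intro h
    have := FiniteField.even_card_iff_char_two.mp h
    omega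
  have h2F : (2 : F) ≠ 0 := Ring.two_ne_zero hchar
  -- χ ^ (2n) = 1
  have hpow2n : χ ^ (2 * n) = 1 := hunits ▸ χ.pow_card_eq_one
  -- separation and kernel
  haveI : NeZero ((Monoid.exponent Fˣ : ℂ)) := by
    refine ⟨Nat.cast_ne_zero.mpr ?_⟩
    exact Monoid.exponent_ne_zero_of_finite
  have hker : ∀ a : Fˣ, χ (a : F) = 1 → a = 1 := by
    intro a ha
    by_contra hne
    have hne' : (a : F) ≠ 1 := fun h => hne (Units.ext h)
    obtain ⟨η, hη⟩ := MulChar.exists_apply_ne_one_of_hasEnoughRootsOfUnity F ℂ hne'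
    obtain ⟨k, hk⟩ := hχ η
    apply hη
    have hu : χ.equivToUnitHom a = 1 := by
      ext
      rw [MulChar.coe_equivToUnitHom, ha, Units.val_one]
    have : MulChar.mulEquivToUnitHom η = (MulChar.mulEquivToUnitHom χ) ^ k := by
      rw [← hk, map_zpow]
    calc η (a : F) = ((MulChar.mulEquivToUnitHom η) a : ℂ) := (MulChar.coe_equivToUnitHom η a).symm
      _ = ((((MulChar.mulEquivToUnitHom χ) ^ k) a : ℂˣ) : ℂ) := by rw [this]
      _ = 1 := by
          have : ((MulChar.mulEquivToUnitHom χ) ^ k) a = ((MulChar.mulEquivToUnitHom χ) a) ^ k := rfl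
          rw [this]
          have : MulChar.mulEquivToUnitHom χ a = 1 := hu
          rw [this, one_zpow, Units.val_one]
  -- generator of the unit group
  obtain ⟨g, hg⟩ := IsCyclic.exists_generator (α := Fˣ)
  have hgord : orderOf g = 2 * n := by
    rw [orderOf_eq_card_of_forall_mem_zpowers hg, Nat.card_eq_fintype_card, hunits]
  set u : Fˣ →* ℂˣ := MulChar.mulEquivToUnitHom χ with hudef
  have hcoe : ∀ a : Fˣ, (u a : ℂ) = χ (a : F) := fun a => MulChar.coe_equivToUnitHom χ a
  have huinj : Function.Injective u := by
    rw [injective_iff_map_eq_one]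
    intro a ha
    apply hker a
    rw [← hcoe a, ha, Units.val_one]
  have hζord : orderOf (u g) = 2 * n := by rw [orderOf_injective u huinj, hgord]
  -- order of χ
  have hordχ : orderOf χ = 2 * n := by
    refine Nat.dvd_antisymm (orderOf_dvd_of_pow_eq_one hpow2n) ?_
    have h1 : (u g) ^ orderOf χ = 1 := by
      have h0 : χ ^ orderOf χ = 1 := pow_orderOf_eq_one χ
      calc u g ^ orderOf χ = (MulChar.mulEquivToUnitHom (χ ^ orderOf χ)) g := by
            rw [map_pow]; rfl
        _ = 1 := by rw [h0, map_one]; rfl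
    have := orderOf_dvd_of_pow_eq_one h1
    rwa [hζord] at this
  -- χ (-1) = -1
  have hm1ne : (-1 : F) ≠ 1 := by
    intro h
    apply h2F
    linear_combination -h
  have hχ_neg1 : χ (-1 : F) = -1 := by
    have hsq : χ (-1 : F) ^ 2 = 1 := by rw [← map_pow, neg_one_sq, map_one]
    have hz : (χ (-1 : F) - 1) * (χ (-1 : F) + 1) = 0 := by linear_combination hsq
    rcases mul_eq_zero.mp hz with h | h
    · exfalso
      have h1 : χ ((-1 : Fˣ) : F) = 1 := by
        rw [Units.val_neg, Units.val_one]
        linear_combination h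
      have h2 := hker (-1) h1
      apply hm1ne
      calc (-1 : F) = ((-1 : Fˣ) : F) := by simp
        _ = ((1 : Fˣ) : F) := by rw [h2]
        _ = 1 := by simp
    · linear_combination h
  -- φ = χ ^ n
  have hρ2 : (χ ^ n) ^ 2 = 1 := by rw [← pow_mul, mul_comm, hpow2n]
  have hφn : φ = χ ^ n := by
    obtain ⟨k, hk0⟩ := hχ φ
    have hk : χ ^ k = φ := hk0
    have hzk : χ ^ (k * 2) = 1 := by
      rw [zpow_mul, hk]
      exact_mod_cast hφ2
    have hdvd : ((2 * n : ℕ) : ℤ) ∣ k * 2 := by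
      rw [← hordχ, orderOf_dvd_iff_zpow_eq_one]
      exact hzk
    have hnk : (n : ℤ) ∣ k := by
      obtain ⟨c, hc⟩ := hdvd
      exact ⟨c, by push_cast at hc; linarith⟩
    obtain ⟨j, hj⟩ := hnk
    rw [hj] at hk
    rcases Int.even_or_odd j with ⟨i, rfl⟩ | ⟨i, rfl⟩
    · exfalso
      apply hφ1
      rw [← hk, zpow_mul, zpow_natCast, zpow_add, ← mul_zpow, ← sq, hρ2, one_zpow]
    · rw [← hk, zpow_mul, zpow_natCast, zpow_add, zpow_one, zpow_mul]
      rw [zpow_two, ← sq, hρ2, one_zpow, one_mul]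
  -- basic value facts
  have hφ0 : φ (0 : F) = 0 := MulChar.map_nonunit φ (by simp)
  set ψ := χ ^ m with hψdef
  have hψ0 : ψ (0 : F) = 0 := MulChar.map_nonunit ψ (by simp)
  have hψ_apply : ∀ x : F, ψ x = χ x ^ m := fun x => MulChar.pow_apply' χ hm0 x
  have hψsq : ∀ x : F, ψ x ^ 2 = φ x := by
    intro x
    rw [hψ_apply, hφn, MulChar.pow_apply' χ hn0, ← pow_mul]
    congr 1
    omega
  have hψ_neg1 : ψ (-1 : F) = (-1 : ℂ) ^ m := by rw [hψ_apply, hχ_neg1]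
  have hφsq1 : ∀ x : F, x ≠ 0 → φ x ^ 2 = 1 := by
    intro x hx
    rw [← MulChar.pow_apply' φ two_ne_zero, hφ2, MulChar.one_apply (isUnit_iff_ne_zero.mpr hx)]
  have hχne : ∀ x : F, x ≠ 0 → χ x ≠ 0 := by
    intro x hx
    have hu := isUnit_iff_ne_zero.mpr hx
    rw [← hu.unit_spec, ← MulChar.coe_toUnitHom]
    exact Units.ne_zero _
  have hψne : ∀ x : F, x ≠ 0 → ψ x ≠ 0 := by
    intro x hx
    rw [hψ_apply]
    exact pow_ne_zero _ (hχne x hx)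
  have hφ_isSquare : ∀ x : F, x ≠ 0 → IsSquare x → φ x = 1 := by
    rintro x hx ⟨y, rfl⟩
    have hy : y ≠ 0 := by rintro rfl; simp at hx
    rw [map_mul, ← sq, ← MulChar.pow_apply' φ two_ne_zero, hφ2,
      MulChar.one_apply (isUnit_iff_ne_zero.mpr hy)]
  have hφ_nonsquare : ∀ x : F, x ≠ 0 → ¬ IsSquare x → φ x = -1 := by
    intro x hx hns
    have hsqx := hφsq1 x hx
    have hz : (φ x - 1) * (φ x + 1) = 0 := by linear_combination hsqx
    rcases mul_eq_zero.mp hz with h | h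
    · exfalso
      apply hns
      have hφx1 : φ x = 1 := by linear_combination h
      set v : Fˣ →* ℂˣ := MulChar.mulEquivToUnitHom φ with hvdef
      have hvcoe : ∀ a : Fˣ, (v a : ℂ) = φ (a : F) := fun a => MulChar.coe_equivToUnitHom φ a
      have hφg : φ ((g : Fˣ) : F) = -1 := by
        have hgsq : φ ((g : Fˣ) : F) ^ 2 = 1 := hφsq1 _ (Units.ne_zero g)
        have hgz : (φ ((g : Fˣ) : F) - 1) * (φ ((g : Fˣ) : F) + 1) = 0 := by
          linear_combination hgsq
        rcases mul_eq_zero.mp hgz with h' | h'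
        · exfalso
          apply hφ1
          apply MulChar.ext
          intro a
          obtain ⟨i, hi⟩ := hg a
          have hvg : v g = 1 := by
            ext
            rw [hvcoe, Units.val_one]
            linear_combination h'
          rw [MulChar.one_apply_coe, ← hi, ← hvcoe, map_zpow, hvg, one_zpow, Units.val_one]
        · linear_combination h'
      have hvg : v g = -1 := by
        ext
        rw [hvcoe, hφg, Units.val_neg, Units.val_one]
      have hu := isUnit_iff_ne_zero.mpr hx
      obtain ⟨j, hj0⟩ := hg hu.unit
      have hj : g ^ j = hu.unit := hj0
      have hxval : φ x = (-1 : ℂ) ^ j := by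
        rw [← hu.unit_spec, ← hj, ← hvcoe, map_zpow, hvg]
        rw [Units.val_zpow_eq_zpow_val, Units.val_neg, Units.val_one]
      rcases Int.even_or_odd j with ⟨i, hji⟩ | hodd
      · exact ⟨((g ^ i : Fˣ) : F), by
          show _ = _
          rw [← hu.unit_spec, ← hj, hji]
          rw [show (g ^ (i + i) : Fˣ) = g ^ i * g ^ i from zpow_add g i i, Units.val_mul]⟩
      · exfalso
        rw [hodd.neg_one_zpow] at hxval
        rw [hφx1] at hxval
        norm_num at hxval
    · linear_combination h
  have hsqneg1 : IsSquare (-1 : F) := by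
    rw [FiniteField.isSquare_neg_one_iff]
    omega
  set S : Finset F := Finset.univ.filter (fun x : F => x ≠ 0 ∧ IsSquare x) with hSdef
  have hpt : ∀ x : F, φ (x ^ 3 + x) = φ (1 + x ^ 2) * ψ (x ^ 2) := by
    intro x
    have hx3 : x ^ 3 + x = x * (1 + x ^ 2) := by ring
    rw [hx3, map_mul]
    rw [show ψ (x ^ 2) = φ x from by rw [map_pow, hψsq]]
    ring
  have himg : (Finset.univ.filter (fun x : F => x ≠ 0)).image (fun x => x ^ 2) = S := by
    ext t
    simp only [hSdef, Finset.mem_image, Finset.mem_filter, Finset.mem_univ, true_and]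
    constructor
    · rintro ⟨x, hx, rfl⟩
      exact ⟨pow_ne_zero 2 hx, ⟨x, (sq x)⟩⟩
    · rintro ⟨ht, y, rfl⟩
      have hy : y ≠ 0 := by rintro rfl; simp at ht
      exact ⟨y, hy, sq y⟩
  have hfib : ∀ t ∈ S, ((Finset.univ.filter (fun x : F => x ≠ 0)).filter
      (fun x => x ^ 2 = t)).card = 2 := by
    intro t ht
    simp only [hSdef, Finset.mem_filter, Finset.mem_univ, true_and] at ht
    obtain ⟨ht0, y, hy⟩ := ht
    have hy0 : y ≠ 0 := fun h => ht0 (by rw [hy, h, mul_zero])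
    have hset : (Finset.univ.filter (fun x : F => x ≠ 0)).filter (fun x => x ^ 2 = t)
        = {y, -y} := by
      ext x
      simp only [Finset.mem_filter, Finset.mem_univ, true_and, Finset.mem_insert,
        Finset.mem_singleton]
      constructor
      · rintro ⟨hx0, hx2⟩
        have hxy : x * x = y * y := by rw [← sq, hx2, hy]
        exact mul_self_eq_mul_self_iff.mp hxy
      · rintro (rfl | rfl)
        · exact ⟨hy0, by rw [sq, ← hy]⟩
        · exact ⟨neg_ne_zero.mpr hy0, by rw [hy]; ring⟩
    rw [hset, Finset.card_insert_of_notMem, Finset.card_singleton]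
    simp only [Finset.mem_singleton]
    intro h
    apply hy0
    have h2 : (2 : F) * y = 0 := by linear_combination h
    rcases mul_eq_zero.mp h2 with h' | h'
    · exact absurd h' h2F
    · exact h'
  have key1 : ∑ x : F, φ (x ^ 3 + x) = 2 * ∑ t ∈ S, φ (1 + t) * ψ t := by
    calc ∑ x : F, φ (x ^ 3 + x) = ∑ x : F, φ (1 + x ^ 2) * ψ (x ^ 2) :=
          Finset.sum_congr rfl fun x _ => hpt x
      _ = ∑ x ∈ Finset.univ.filter (fun x : F => x ≠ 0), φ (1 + x ^ 2) * ψ (x ^ 2) := by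
          refine (Finset.sum_subset (Finset.filter_subset _ _) ?_).symm
          intro x _ hx
          simp only [Finset.mem_filter, Finset.mem_univ, true_and, not_not] at hx
          subst hx
          norm_num [hψ0]
      _ = ∑ t ∈ (Finset.univ.filter (fun x : F => x ≠ 0)).image (fun x => x ^ 2),
            ((Finset.univ.filter (fun x : F => x ≠ 0)).filter (fun x => x ^ 2 = t)).card
              • (φ (1 + t) * ψ t) :=
          Finset.sum_comp (fun t => φ (1 + t) * ψ t) (fun x : F => x ^ 2)
      _ = ∑ t ∈ S, (2 : ℕ) • (φ (1 + t) * ψ t) := by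
          rw [himg]
          exact Finset.sum_congr rfl fun t ht => by rw [hfib t ht]
      _ = 2 * ∑ t ∈ S, φ (1 + t) * ψ t := by
          rw [Finset.mul_sum]
          refine Finset.sum_congr rfl fun t _ => ?_
          rw [nsmul_eq_mul]
          norm_num
  have hinv : χ ^ (-((m : ℕ) : ℤ)) = ψ⁻¹ := by
    rw [zpow_neg, zpow_natCast]
  have hJ : jacobiSum φ ψ + jacobiSum φ ψ⁻¹
      = ∑ x : F, (ψ x + (ψ x)⁻¹) * φ (1 - x) := by
    rw [jacobiSum_comm φ ψ, jacobiSum_comm φ ψ⁻¹, jacobiSum, jacobiSum,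
      ← Finset.sum_add_distrib]
    refine Finset.sum_congr rfl fun x _ => ?_
    rw [MulChar.inv_apply_eq_inv']
    ring
  have hJ2 : ∑ x : F, (ψ x + (ψ x)⁻¹) * φ (1 - x) = ∑ x ∈ S, 2 * (ψ x * φ (1 - x)) := by
    have hv : ∀ x ∈ (Finset.univ : Finset F), x ∉ S → (ψ x + (ψ x)⁻¹) * φ (1 - x) = 0 := by
      intro x _ hx
      simp only [hSdef, Finset.mem_filter, Finset.mem_univ, true_and, not_and] at hx
      by_cases hx0 : x = 0
      · subst hx0
        rw [hψ0]
        norm_num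
      · have hφx : φ x = -1 := hφ_nonsquare x hx0 (hx hx0)
        have h2 := hψsq x
        rw [hφx] at h2
        have h4 : (ψ x)⁻¹ = - ψ x := inv_eq_of_mul_eq_one_right (by linear_combination -h2)
        rw [h4]
        ring
    rw [← Finset.sum_subset (Finset.subset_univ S) hv]
    refine Finset.sum_congr rfl fun x hx => ?_
    simp only [hSdef, Finset.mem_filter, Finset.mem_univ, true_and] at hx
    have hφx : φ x = 1 := hφ_isSquare x hx.1 hx.2
    have h1 : ψ x * ψ x = 1 := by
      rw [← sq, hψsq, hφx]
    rw [inv_eq_of_mul_eq_one_right h1]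
    ring
  have hre : ∑ x ∈ S, ψ x * φ (1 - x) = (-1 : ℂ) ^ m * ∑ t ∈ S, φ (1 + t) * ψ t := by
    have e : ∑ x ∈ S, ψ x * φ (1 - x) = ∑ t ∈ S, ψ (-t) * φ (1 + t) := by
      refine Finset.sum_equiv (Equiv.neg F) ?_ ?_
      · intro x
        simp only [hSdef, Finset.mem_filter, Finset.mem_univ, true_and, Equiv.neg_apply]
        constructor
        · rintro ⟨hx0, hxs⟩
          exact ⟨neg_ne_zero.mpr hx0, by rw [neg_eq_neg_one_mul]; exact hsqneg1.mul hxs⟩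
        · rintro ⟨hx0, hxs⟩
          refine ⟨fun h => hx0 (by rw [h, neg_zero]), ?_⟩
          have : IsSquare (-(-x) : F) := by rw [neg_eq_neg_one_mul]; exact hsqneg1.mul hxs
          rwa [neg_neg] at this
      · intro x _
        simp only [Equiv.neg_apply, neg_neg, sub_neg_eq_add]
        rw [sub_eq_add_neg]
    rw [e, Finset.mul_sum]
    refine Finset.sum_congr rfl fun t _ => ?_
    rw [show (-t : F) = -1 * t by ring, map_mul, hψ_neg1]
    ring
  refine ⟨key1.symm, ?_⟩
  rw [hinv, hJ, hJ2, key1]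
  rw [show ∑ x ∈ S, 2 * (ψ x * φ (1 - x)) = 2 * ∑ x ∈ S, ψ x * φ (1 - x) from
    (Finset.mul_sum _ _ _).symm, hre]
  have h1 : ((-1 : ℂ) ^ m) * ((-1 : ℂ) ^ m) = 1 := by
    rw [← pow_add]
    exact Even.neg_one_pow ⟨m, rfl⟩
  linear_combination 2 * (∑ t ∈ S, φ (1 + t) * ψ t) * h1
end
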